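/- arXiv:2211.17242 — 2 statements merged into one kernel-verified Lean document; each statement's English description precedes it below -/
import Mathlib

section
/- Let a, b, k, k₁, k₂ be real numbers with a > 0, b > 0 and k² = (b·k₁² + a·k₂²)/(a + b). Let f : ℝ × ℝ → ℝ, let S₀u : ℝ × ℝ → ℝ be twice continuously differentiable, and set S₀v = (a/b)·S₀u. Then at every point (ζ, t), the sum of the two right-hand sides ((k² − k₁²)·S₀u_{ζζ} − f(S₀u, S₀v)) + ((k² − k₂²)·S₀v_{ζζ} + f(S₀u, S₀v)) equals zero; hence the degenerate linear system −a·S₁u + b·S₁v = (k² − k₁²)·S₀u_{ζζ} − f(S₀u, S₀v), a·S₁u − b·S₁v = (k² − k₂²)·S₀v_{ζζ} + f(S₀u, S₀v) is solvable at every point. -/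
/-- Partial derivative with respect to the first (stretched `ζ`) variable. -/
noncomputable def pz (u : ℝ × ℝ → ℝ) : ℝ × ℝ → ℝ :=
  fun p => deriv (fun s => u (s, p.2)) p.1

lemma pz_const_mul (c : ℝ) (u : ℝ × ℝ → ℝ) :
    pz (fun p => c * u p) = fun p => c * pz u p := by
  funext p
  simp [pz, deriv_const_mul_field]

theorem first_order_inner_system_solvable
    (a b k k₁ k₂ : ℝ) (ha : 0 < a) (hb : 0 < b)
    (hk : k ^ 2 = (b * k₁ ^ 2 + a * k₂ ^ 2) / (a + b))
    (f : ℝ × ℝ → ℝ)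
    (S₀u : ℝ × ℝ → ℝ) (hS₀u : ContDiff ℝ 2 S₀u)
    (S₀v : ℝ × ℝ → ℝ) (hS₀v : S₀v = fun p => (a / b) * S₀u p) :
    (∀ p : ℝ × ℝ,
        ((k ^ 2 - k₁ ^ 2) * pz (pz S₀u) p - f (S₀u p, S₀v p)) +
          ((k ^ 2 - k₂ ^ 2) * pz (pz S₀v) p + f (S₀u p, S₀v p)) = 0) ∧
      (∀ p : ℝ × ℝ, ∃ S₁u S₁v : ℝ,
        -a * S₁u + b * S₁v = (k ^ 2 - k₁ ^ 2) * pz (pz S₀u) p - f (S₀u p, S₀v p) ∧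
          a * S₁u - b * S₁v = (k ^ 2 - k₂ ^ 2) * pz (pz S₀v) p + f (S₀u p, S₀v p)) := by
  have hab : a + b ≠ 0 := by positivity
  have hvzz : ∀ p : ℝ × ℝ, pz (pz S₀v) p = (a / b) * pz (pz S₀u) p := by
    intro p
    rw [hS₀v, pz_const_mul, pz_const_mul]
  have hsum : ∀ p : ℝ × ℝ,
      ((k ^ 2 - k₁ ^ 2) * pz (pz S₀u) p - f (S₀u p, S₀v p)) +
        ((k ^ 2 - k₂ ^ 2) * pz (pz S₀v) p + f (S₀u p, S₀v p)) = 0 := by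
    intro p
    rw [hvzz p, hk]
    field_simp
    ring
  refine ⟨hsum, fun p => ?_⟩
  refine ⟨-((k ^ 2 - k₁ ^ 2) * pz (pz S₀u) p - f (S₀u p, S₀v p)) / a, 0, ?_, ?_⟩
  · field_simp; ring
  · have := hsum p
    field_simp
    linarith
end

section
/- Let a, b, k, k₁, k₂ be real numbers with a > 0, b > 0, k ≠ 0 and k² = (b·k₁² + a·k₂²)/(a + b). Let f : ℝ × ℝ → ℝ be smooth, and let S₀u, S₁u : ℝ × ℝ → ℝ be smooth functions of (ζ, t). Set S₀v = (a/b)·S₀u and S₁v = (a/b)·S₁u + (1/b)·((k² − k₁²)·S₀u_{ζζ} − f(S₀u, (a/b)·S₀u)). Assume the second-order solvability condition for the variable ζ = (x + kt)/ε holds at every point: (k² − k₁²)·S₁u_{ζζ} + 2k·S₀u_{ζt} + (k² − k₂²)·S₁v_{ζζ} + 2k·S₀v_{ζt} = 0. Then, with K = (k² − k₂²)(k² − k₁²)/(2k(a + b)) and h(s) = ((k² − k₂²)/(2k(a + b)))·f(s, (a/b)·s), the function S₀u satisfies at every point: ∂_ζ( S₀u_t + K·S₀u_{ζζζ} − ∂_ζ(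 h(S₀u) ) ) = 0. -/
/-- Partial derivative with respect to the second (time) variable. -/
noncomputable def pt (u : ℝ × ℝ → ℝ) : ℝ × ℝ → ℝ :=
  fun p => deriv (fun s => u (p.1, s)) p.2

/-- Directional derivative along a fixed vector `v`. -/
noncomputable def Dv (v : ℝ × ℝ) (u : ℝ × ℝ → ℝ) : ℝ × ℝ → ℝ :=
  fun p => fderiv ℝ u p v

lemma Dv_contDiff {u : ℝ × ℝ → ℝ} (hu : ContDiff ℝ (⊤ : ℕ∞) u) (v : ℝ × ℝ) :
    ContDiff ℝ (⊤ : ℕ∞) (Dv v u) :=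
  (hu.fderiv_right (by simp)).clm_apply contDiff_const

lemma Dv_diff {u : ℝ × ℝ → ℝ} (hu : ContDiff ℝ (⊤ : ℕ∞) u) (v : ℝ × ℝ) :
    Differentiable ℝ (Dv v u) :=
  (Dv_contDiff hu v).differentiable (by simp)

lemma pz_eq {u : ℝ × ℝ → ℝ} (hu : Differentiable ℝ u) : pz u = Dv (1, 0) u := by
  funext p
  have h1 : HasDerivAt (fun s : ℝ => ((s, p.2) : ℝ × ℝ)) (((1 : ℝ), (0 : ℝ)) : ℝ × ℝ) p.1 :=
    HasDerivAt.prodMk (hasDerivAt_id p.1) (hasDerivAt_const p.1 p.2)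
  have h2 := (hu (p.1, p.2)).hasFDerivAt.comp_hasDerivAt p.1 h1
  simpa [pz, Dv, Function.comp_def] using h2.deriv

lemma pt_eq {u : ℝ × ℝ → ℝ} (hu : Differentiable ℝ u) : pt u = Dv (0, 1) u := by
  funext p
  have h1 : HasDerivAt (fun s : ℝ => ((p.1, s) : ℝ × ℝ)) (((0 : ℝ), (1 : ℝ)) : ℝ × ℝ) p.2 :=
    HasDerivAt.prodMk (hasDerivAt_const p.2 p.1) (hasDerivAt_id p.2)
  have h2 := (hu (p.1, p.2)).hasFDerivAt.comp_hasDerivAt p.2 h1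
  simpa [pt, Dv, Function.comp_def] using h2.deriv

lemma Dv_const_mul (v : ℝ × ℝ) (c : ℝ) {u : ℝ × ℝ → ℝ} (hu : Differentiable ℝ u) :
    Dv v (fun q => c * u q) = fun q => c * Dv v u q := by
  funext p
  have h1 : HasFDerivAt (fun q => c * u q) (c • fderiv ℝ u p) p :=
    (hu p).hasFDerivAt.const_mul c
  simp [Dv, h1.fderiv]

lemma Dv_comb (v : ℝ × ℝ) (c d e : ℝ) {u w x : ℝ × ℝ → ℝ}
    (hu : Differentiable ℝ u) (hw : Differentiable ℝ w) (hx : Differentiable ℝ x) :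
    Dv v (fun q => c * u q + d * (e * w q - x q))
      = fun q => c * Dv v u q + d * (e * Dv v w q - Dv v x q) := by
  funext p
  have h1 : HasFDerivAt (fun q => c * u q + d * (e * w q - x q))
      (c • fderiv ℝ u p + d • (e • fderiv ℝ w p - fderiv ℝ x p)) p :=
    ((hu p).hasFDerivAt.const_mul c).add
      ((((hw p).hasFDerivAt.const_mul e).sub (hx p).hasFDerivAt).const_mul d)
  simp [Dv, h1.fderiv]

lemma Dv_comb2 (v : ℝ × ℝ) (c d : ℝ) {u w x : ℝ × ℝ → ℝ}
    (hu : Differentiable ℝ u) (hw : Differentiable ℝ w) (hx : Differentiable ℝ x) :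
    Dv v (fun q => u q + c * w q - d * x q)
      = fun q => Dv v u q + c * Dv v w q - d * Dv v x q := by
  funext p
  have h1 : HasFDerivAt (fun q => u q + c * w q - d * x q)
      (fderiv ℝ u p + c • fderiv ℝ w p - d • fderiv ℝ x p) p :=
    ((hu p).hasFDerivAt.add ((hw p).hasFDerivAt.const_mul c)).sub
      ((hx p).hasFDerivAt.const_mul d)
  simp [Dv, h1.fderiv]

lemma Dv_Dv {u : ℝ × ℝ → ℝ} (hu : ContDiff ℝ (⊤ : ℕ∞) u) (v w : ℝ × ℝ) (p : ℝ × ℝ) :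
    Dv v (Dv w u) p = fderiv ℝ (fderiv ℝ u) p v w := by
  have h1 : DifferentiableAt ℝ (fderiv ℝ u) p :=
    ((hu.fderiv_right (m := 1) (by exact WithTop.coe_le_coe.mpr le_top)).differentiable one_ne_zero) p
  have h2 : HasFDerivAt (Dv w u)
      ((ContinuousLinearMap.apply ℝ ℝ w).comp (fderiv ℝ (fderiv ℝ u) p)) p :=
    (ContinuousLinearMap.apply ℝ ℝ w).hasFDerivAt.comp p h1.hasFDerivAt
  simp [Dv, h2.fderiv]

lemma Dv_symm {u : ℝ × ℝ → ℝ} (hu : ContDiff ℝ (⊤ : ℕ∞) u) (v w : ℝ × ℝ) (p : ℝ × ℝ) :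
    Dv v (Dv w u) p = Dv w (Dv v u) p := by
  rw [Dv_Dv hu, Dv_Dv hu]
  exact second_derivative_symmetric
    (fun y => ((hu.differentiable (by simp)) y).hasFDerivAt)
    ((((hu.fderiv_right (m := 1) (by exact WithTop.coe_le_coe.mpr le_top)).differentiable one_ne_zero) p).hasFDerivAt) v w

lemma scalar_step (a b k k₁ k₂ A B C G : ℝ) (ha : 0 < a) (hb : 0 < b) (hk0 : k ≠ 0)
    (hk : k ^ 2 = (b * k₁ ^ 2 + a * k₂ ^ 2) / (a + b))
    (H : (k ^ 2 - k₁ ^ 2) * A + 2 * k * B +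
      (k ^ 2 - k₂ ^ 2) * (a / b * A + 1 / b * ((k ^ 2 - k₁ ^ 2) * C - G)) +
      2 * k * (a / b * B) = 0) :
    B + (k ^ 2 - k₂ ^ 2) * (k ^ 2 - k₁ ^ 2) / (2 * k * (a + b)) * C
      - (k ^ 2 - k₂ ^ 2) / (2 * k * (a + b)) * G = 0 := by
  have hb' : b ≠ 0 := hb.ne'
  have hab : a + b ≠ 0 := by positivity
  have hk' : k ^ 2 * (a + b) = b * k₁ ^ 2 + a * k₂ ^ 2 := by
    field_simp at hk; linarith
  field_simp at H
  have key : 2 * k * (a + b) * B + (k ^ 2 - k₂ ^ 2) * ((k ^ 2 - k₁ ^ 2) * C - G) = 0 := by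
    linear_combination H - A * hk'
  calc B + (k ^ 2 - k₂ ^ 2) * (k ^ 2 - k₁ ^ 2) / (2 * k * (a + b)) * C
      - (k ^ 2 - k₂ ^ 2) / (2 * k * (a + b)) * G
      = (2 * k * (a + b) * B + (k ^ 2 - k₂ ^ 2) * ((k ^ 2 - k₁ ^ 2) * C - G))
          / (2 * k * (a + b)) := by
        field_simp
        ring
    _ = 0 := by rw [key, zero_div]

theorem kdv_from_second_order_solvability_plus
    (a b k k₁ k₂ : ℝ) (ha : 0 < a) (hb : 0 < b) (hk0 : k ≠ 0)
    (hk : k ^ 2 = (b * k₁ ^ 2 + a * k₂ ^ 2) / (a + b))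
    (f : ℝ × ℝ → ℝ) (hf : ContDiff ℝ (⊤ : ℕ∞) f)
    (S₀u S₁u : ℝ × ℝ → ℝ) (hS₀u : ContDiff ℝ (⊤ : ℕ∞) S₀u) (hS₁u : ContDiff ℝ (⊤ : ℕ∞) S₁u)
    (S₀v : ℝ × ℝ → ℝ) (hS₀v : S₀v = fun p => (a / b) * S₀u p)
    (S₁v : ℝ × ℝ → ℝ)
    (hS₁v : S₁v = fun p => (a / b) * S₁u p +
      (1 / b) * ((k ^ 2 - k₁ ^ 2) * pz (pz S₀u) p - f (S₀u p, (a / b) * S₀u p)))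
    (hsolv : ∀ p : ℝ × ℝ,
      (k ^ 2 - k₁ ^ 2) * pz (pz S₁u) p + 2 * k * pt (pz S₀u) p +
        (k ^ 2 - k₂ ^ 2) * pz (pz S₁v) p + 2 * k * pt (pz S₀v) p = 0)
    (K : ℝ) (hK : K = (k ^ 2 - k₂ ^ 2) * (k ^ 2 - k₁ ^ 2) / (2 * k * (a + b)))
    (h : ℝ → ℝ)
    (hh : ∀ s : ℝ, h s = ((k ^ 2 - k₂ ^ 2) / (2 * k * (a + b))) * f (s, (a / b) * s)) :
    ∀ p : ℝ × ℝ,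
      pz (fun q => pt S₀u q + K * pz (pz (pz S₀u)) q - pz (fun r => h (S₀u r)) q) p
        = 0 := by
  intro p
  set g : ℝ × ℝ → ℝ := fun q => f (S₀u q, (a / b) * S₀u q) with hg_def
  have hg : ContDiff ℝ (⊤ : ℕ∞) g := hf.comp (hS₀u.prodMk (contDiff_const.mul hS₀u))
  have hd0 : Differentiable ℝ S₀u := hS₀u.differentiable (by simp)
  have hd1 : Differentiable ℝ S₁u := hS₁u.differentiable (by simp)
  have hZ0 : ContDiff ℝ (⊤ : ℕ∞) (Dv (1, 0) S₀u) := Dv_contDiff hS₀u _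
  have hZZ0 : ContDiff ℝ (⊤ : ℕ∞) (Dv (1, 0) (Dv (1, 0) S₀u)) := Dv_contDiff hZ0 _
  have hZZZ0 : ContDiff ℝ (⊤ : ℕ∞) (Dv (1, 0) (Dv (1, 0) (Dv (1, 0) S₀u))) := Dv_contDiff hZZ0 _
  have hT0 : ContDiff ℝ (⊤ : ℕ∞) (Dv (0, 1) S₀u) := Dv_contDiff hS₀u _
  have hZ1 : ContDiff ℝ (⊤ : ℕ∞) (Dv (1, 0) S₁u) := Dv_contDiff hS₁u _
  have hZg : ContDiff ℝ (⊤ : ℕ∞) (Dv (1, 0) g) := Dv_contDiff hg _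
  have hpz0 : pz S₀u = Dv (1, 0) S₀u := pz_eq hd0
  have hpz1 : pz (pz S₀u) = Dv (1, 0) (Dv (1, 0) S₀u) := by
    rw [hpz0]; exact pz_eq (Dv_diff hS₀u _)
  have hpz2 : pz (pz (pz S₀u)) = Dv (1, 0) (Dv (1, 0) (Dv (1, 0) S₀u)) := by
    rw [hpz1]; exact pz_eq (Dv_diff hZ0 _)
  have hpt0 : pt S₀u = Dv (0, 1) S₀u := pt_eq hd0
  have hptz : pt (pz S₀u) = Dv (0, 1) (Dv (1, 0) S₀u) := by
    rw [hpz0]; exact pt_eq (Dv_diff hS₀u _)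
  have hpzS₁u : pz S₁u = Dv (1, 0) S₁u := pz_eq hd1
  have hpzzS₁u : pz (pz S₁u) = Dv (1, 0) (Dv (1, 0) S₁u) := by
    rw [hpzS₁u]; exact pz_eq (Dv_diff hS₁u _)
  -- S₀v derivatives
  have hpzS₀v : pz S₀v = fun q => (a / b) * Dv (1, 0) S₀u q := by
    rw [hS₀v, pz_eq ((contDiff_const.mul hS₀u).differentiable (by simp) : Differentiable ℝ _)]
    exact Dv_const_mul _ _ hd0
  have hptzS₀v : pt (pz S₀v) = fun q => (a / b) * Dv (0, 1) (Dv (1, 0) S₀u) q := by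
    rw [hpzS₀v, pt_eq ((contDiff_const.mul hZ0).differentiable (by simp) : Differentiable ℝ _)]
    exact Dv_const_mul _ _ (Dv_diff hS₀u _)
  -- S₁v derivatives
  have hS₁v' : S₁v = fun q => (a / b) * S₁u q +
      (1 / b) * ((k ^ 2 - k₁ ^ 2) * Dv (1, 0) (Dv (1, 0) S₀u) q - g q) := by
    rw [hS₁v]
    funext q
    rw [hpz1]
  have hS₁vc : ContDiff ℝ (⊤ : ℕ∞) S₁v := by
    rw [hS₁v']
    exact (contDiff_const.mul hS₁u).add
      (contDiff_const.mul ((contDiff_const.mul hZZ0).sub hg))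
  have hpzS₁v : pz S₁v = fun q => (a / b) * Dv (1, 0) S₁u q +
      (1 / b) * ((k ^ 2 - k₁ ^ 2) * Dv (1, 0) (Dv (1, 0) (Dv (1, 0) S₀u)) q
        - Dv (1, 0) g q) := by
    rw [pz_eq (hS₁vc.differentiable (by simp)), hS₁v']
    exact Dv_comb _ _ _ _ hd1 (Dv_diff hZ0 _) (hg.differentiable (by simp))
  have hpzzS₁v : pz (pz S₁v) = fun q => (a / b) * Dv (1, 0) (Dv (1, 0) S₁u) q +
      (1 / b) * ((k ^ 2 - k₁ ^ 2) * Dv (1, 0) (Dv (1, 0) (Dv (1, 0) (Dv (1, 0) S₀u))) q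
        - Dv (1, 0) (Dv (1, 0) g) q) := by
    rw [hpzS₁v, pz_eq (((contDiff_const.mul hZ1).add
      (contDiff_const.mul ((contDiff_const.mul hZZZ0).sub hZg))).differentiable (by simp) :
        Differentiable ℝ _)]
    exact Dv_comb _ _ _ _ (Dv_diff hS₁u _) (Dv_diff hZZ0 _) (Dv_diff hg _)
  -- the solvability condition in scalar form
  have H : (k ^ 2 - k₁ ^ 2) * Dv (1, 0) (Dv (1, 0) S₁u) p +
      2 * k * Dv (0, 1) (Dv (1, 0) S₀u) p +
      (k ^ 2 - k₂ ^ 2) * (a / b * Dv (1, 0) (Dv (1, 0) S₁u) p +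
        1 / b * ((k ^ 2 - k₁ ^ 2) * Dv (1, 0) (Dv (1, 0) (Dv (1, 0) (Dv (1, 0) S₀u))) p
          - Dv (1, 0) (Dv (1, 0) g) p)) +
      2 * k * (a / b * Dv (0, 1) (Dv (1, 0) S₀u) p) = 0 := by
    have h0 := hsolv p
    rw [hpzzS₁u, hptz, hpzzS₁v, hptzS₀v] at h0
    exact h0
  -- the inner function of the goal, rewritten
  have hpzfun : pz (fun r => h (S₀u r)) =
      fun q => ((k ^ 2 - k₂ ^ 2) / (2 * k * (a + b))) * Dv (1, 0) g q := by
    have hfun : (fun r => h (S₀u r)) =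
        fun r => ((k ^ 2 - k₂ ^ 2) / (2 * k * (a + b))) * g r := by
      funext r; exact hh (S₀u r)
    rw [hfun, pz_eq ((contDiff_const.mul hg).differentiable (by simp) : Differentiable ℝ _)]
    exact Dv_const_mul _ _ (hg.differentiable (by simp))
  have hE : (fun q => pt S₀u q + K * pz (pz (pz S₀u)) q - pz (fun r => h (S₀u r)) q)
      = fun q => Dv (0, 1) S₀u q + K * Dv (1, 0) (Dv (1, 0) (Dv (1, 0) S₀u)) q -
          ((k ^ 2 - k₂ ^ 2) / (2 * k * (a + b))) * Dv (1, 0) g q := by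
    funext q
    rw [hpt0, hpz2, hpzfun]
  rw [hE, pz_eq (((hT0.add (contDiff_const.mul hZZZ0)).sub
      (contDiff_const.mul hZg)).differentiable (by simp) : Differentiable ℝ _),
    Dv_comb2 _ _ _ (hT0.differentiable (by simp)) (Dv_diff hZZ0 _) (Dv_diff hg _)]
  show Dv (1, 0) (Dv (0, 1) S₀u) p + K * Dv (1, 0) (Dv (1, 0) (Dv (1, 0) (Dv (1, 0) S₀u))) p
      - ((k ^ 2 - k₂ ^ 2) / (2 * k * (a + b))) * Dv (1, 0) (Dv (1, 0) g) p = 0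
  rw [Dv_symm hS₀u (1, 0) (0, 1) p, hK]
  exact scalar_step a b k k₁ k₂ _ _ _ _ ha hb hk0 hk H
end
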